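/- Let R be a commutative ring, n a positive integer, σ : ℤⁿ → Aut(R) a group homomorphism, and t₁, …, tₙ units of R fixed to satisfy: (1) σ_i σ_j(t_i t_j) = μ_{ij} μ_{ji} σ_i(t_i) σ_j(t_j) for all i ≠ j, and (2) t_j σ_i σ_k(t_j) = σ_i(t_j) σ_k(t_j) for all pairwise distinct i, j, k, where μ_{ij} are units of R fixed by all σ_g. Define τ_{ij} = μ_{ji} σ_j(t_j) (σ_i σ_j(t_j))⁻¹ for i ≠ j. Then τ_{ij} τ_{ji} = 1 for all i ≠ j, and σ_k(τ_{ij}) = τ_{ij} for all pairwise distinct i, j, k. -/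

import Mathlib

/-!
Since the `σᵢ` commute, condition (1) says exactly that the numerator
`μᵢⱼ μⱼᵢ σᵢ(tᵢ) σⱼ(tⱼ)` of `τᵢⱼ τⱼᵢ` equals its denominator `σᵢσⱼ(tⱼ) σⱼσᵢ(tᵢ)`.
Cross-multiplying, `σₖ(τᵢⱼ) = τᵢⱼ` becomes `σₖσⱼ(tⱼ) σᵢσⱼ(tⱼ) = σⱼ(tⱼ) σₖσᵢσⱼ(tⱼ)`,
which is `σⱼ` applied to condition (2).
-/

/-- `σᵢ := σ(eᵢ)` for the standard basis of `ℤⁿ`. -/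
def sigmaGen {R : Type*} [CommRing R] {n : ℕ}
    (σ : Multiplicative (Fin n → ℤ) →* RingAut R) (i : Fin n) : RingAut R :=
  σ (Multiplicative.ofAdd (Pi.single i 1))

/-- `τᵢⱼ = μⱼᵢ σⱼ(tⱼ) (σᵢσⱼ(tⱼ))⁻¹`. -/
noncomputable def tauElt {R : Type*} [CommRing R] {n : ℕ}
    (σ : Multiplicative (Fin n → ℤ) →* RingAut R)
    (t : Fin n → Rˣ) (μ : Fin n → Fin n → Rˣ) (i j : Fin n) : R :=
  (μ j i : R) * sigmaGen σ j (t j : R) *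
    Ring.inverse (sigmaGen σ i (sigmaGen σ j (t j : R)))

theorem map_ringInverse {M₀ N₀ F : Type*} [MonoidWithZero M₀] [MonoidWithZero N₀]
    [EquivLike F M₀ N₀] [MulEquivClass F M₀ N₀] (e : F) (x : M₀) :
    e (Ring.inverse x) = Ring.inverse (e x) := by
  by_cases hx : IsUnit x
  · rw [← one_mul (Ring.inverse (e x)), Ring.eq_mul_inverse_iff_mul_eq _ _ _ (hx.map e),
      ← map_mul, Ring.inverse_mul_cancel x hx, map_one]
  · rw [Ring.inverse_non_unit x hx, Ring.inverse_non_unit _ (by rwa [isUnit_map_iff]), map_zero]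

theorem Ring.mul_inverse_eq_mul_inverse_iff {M₀ : Type*} [CommMonoidWithZero M₀] {a b c d : M₀}
    (hb : IsUnit b) (hd : IsUnit d) :
    a * Ring.inverse b = c * Ring.inverse d ↔ a * d = c * b := by
  rw [eq_comm, Ring.eq_mul_inverse_iff_mul_eq _ _ _ hb, mul_right_comm, eq_comm,
    Ring.eq_mul_inverse_iff_mul_eq _ _ _ hd]

section

variable {R : Type*} [CommRing R] {n : ℕ} (σ : Multiplicative (Fin n → ℤ) →* RingAut R)

theorem sigmaGen_apply_comm (i j : Fin n) (x : R) :
    sigmaGen σ i (sigmaGen σ j x) = sigmaGen σ j (sigmaGen σ i x) := by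
  have : sigmaGen σ i * sigmaGen σ j = sigmaGen σ j * sigmaGen σ i := by
    simp only [sigmaGen, ← map_mul, mul_comm]
  exact DFunLike.congr_fun this x

variable (t : Fin n → Rˣ) (μ : Fin n → Fin n → Rˣ)

theorem tauElt_mul_tauElt {i j : Fin n}
    (h1 : sigmaGen σ i (sigmaGen σ j ((t i : R) * (t j : R)))
        = (μ i j : R) * (μ j i : R) * (sigmaGen σ i (t i : R) * sigmaGen σ j (t j : R))) :
    tauElt σ t μ i j * tauElt σ t μ j i = 1 := by
  set a := sigmaGen σ i (sigmaGen σ j (t j : R))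
  set b := sigmaGen σ j (sigmaGen σ i (t i : R))
  have ha : IsUnit a := ((t j).isUnit.map _).map _
  have hb : IsUnit b := ((t i).isUnit.map _).map _
  have hab : (μ i j : R) * (μ j i : R) * (sigmaGen σ i (t i : R) * sigmaGen σ j (t j : R))
      = a * b := by
    rw [← h1, map_mul, map_mul, sigmaGen_apply_comm σ i j (t i : R), mul_comm]
  calc tauElt σ t μ i j * tauElt σ t μ j i
      = (μ i j : R) * (μ j i : R) * (sigmaGen σ i (t i : R) * sigmaGen σ j (t j : R))
          * (Ring.inverse b * Ring.inverse a) := by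
        simp only [tauElt]; ring
    _ = 1 := by rw [hab, ← Ring.inverse_mul (.inl ha), Ring.mul_inverse_cancel _ (ha.mul hb)]

theorem sigmaGen_apply_tauElt {i j k : Fin n} (hμ : sigmaGen σ k (μ j i : R) = μ j i)
    (h2 : (t j : R) * sigmaGen σ i (sigmaGen σ k (t j : R))
        = sigmaGen σ i (t j : R) * sigmaGen σ k (t j : R)) :
    sigmaGen σ k (tauElt σ t μ i j) = tauElt σ t μ i j := by
  have h2' := congrArg (sigmaGen σ j) h2
  simp only [map_mul] at h2'
  simp only [tauElt, map_mul, map_ringInverse, hμ, mul_assoc]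
  congr 1
  rw [Ring.mul_inverse_eq_mul_inverse_iff (((t j).isUnit.map _).map _ |>.map _)
    (((t j).isUnit.map _).map _)]
  calc sigmaGen σ k (sigmaGen σ j (t j : R)) * sigmaGen σ i (sigmaGen σ j (t j : R))
      = sigmaGen σ j (sigmaGen σ i (t j : R)) * sigmaGen σ j (sigmaGen σ k (t j : R)) := by
        rw [mul_comm, sigmaGen_apply_comm σ i j, sigmaGen_apply_comm σ k j]
    _ = sigmaGen σ j (t j : R) * sigmaGen σ j (sigmaGen σ i (sigmaGen σ k (t j : R))) := h2'.symm
    _ = sigmaGen σ j (t j : R) * sigmaGen σ k (sigmaGen σ i (sigmaGen σ j (t j : R))) := by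
        rw [sigmaGen_apply_comm σ i k, sigmaGen_apply_comm σ j k, sigmaGen_apply_comm σ j i]

end

theorem stmt8_general {R : Type*} [CommRing R] {n : ℕ}
    (σ : Multiplicative (Fin n → ℤ) →* RingAut R)
    (t : Fin n → Rˣ) (μ : Fin n → Fin n → Rˣ)
    (hμfix : ∀ (g : Multiplicative (Fin n → ℤ)) (i j : Fin n), i ≠ j →
      σ g (μ i j : R) = (μ i j : R))
    (h1 : ∀ i j : Fin n, i ≠ j →
      sigmaGen σ i (sigmaGen σ j ((t i : R) * (t j : R)))
        = (μ i j : R) * (μ j i : R) * (sigmaGen σ i (t i : R) * sigmaGen σ j (t j : R)))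
    (h2 : ∀ i j k : Fin n, i ≠ j → j ≠ k → i ≠ k →
      (t j : R) * sigmaGen σ i (sigmaGen σ k (t j : R))
        = sigmaGen σ i (t j : R) * sigmaGen σ k (t j : R)) :
    (∀ i j : Fin n, i ≠ j → tauElt σ t μ i j * tauElt σ t μ j i = 1) ∧
    (∀ i j k : Fin n, i ≠ j → j ≠ k → i ≠ k →
      sigmaGen σ k (tauElt σ t μ i j) = tauElt σ t μ i j) :=
  ⟨fun i j hij => tauElt_mul_tauElt σ t μ (h1 i j hij),
    fun i j k hij hjk hik =>
      sigmaGen_apply_tauElt σ t μ (hμfix _ j i hij.symm) (h2 i j k hij hjk hik)⟩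

/-- Under the two TGWA consistency conditions, the elements
`τᵢⱼ = μⱼᵢ σⱼ(tⱼ)(σᵢσⱼ(tⱼ))⁻¹` satisfy `τᵢⱼτⱼᵢ = 1` for `i ≠ j` and are fixed by `σₖ`
for pairwise distinct `i, j, k`. -/
theorem stmt8 {R : Type*} [CommRing R] {n : ℕ} (hn : 0 < n)
    (σ : Multiplicative (Fin n → ℤ) →* RingAut R)
    (t : Fin n → Rˣ) (μ : Fin n → Fin n → Rˣ)
    (hμfix : ∀ (g : Multiplicative (Fin n → ℤ)) (i j : Fin n), i ≠ j →
      σ g (μ i j : R) = (μ i j : R))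
    (h1 : ∀ i j : Fin n, i ≠ j →
      sigmaGen σ i (sigmaGen σ j ((t i : R) * (t j : R)))
        = (μ i j : R) * (μ j i : R) * (sigmaGen σ i (t i : R) * sigmaGen σ j (t j : R)))
    (h2 : ∀ i j k : Fin n, i ≠ j → j ≠ k → i ≠ k →
      (t j : R) * sigmaGen σ i (sigmaGen σ k (t j : R))
        = sigmaGen σ i (t j : R) * sigmaGen σ k (t j : R)) :
    (∀ i j : Fin n, i ≠ j → tauElt σ t μ i j * tauElt σ t μ j i = 1) ∧
    (∀ i j k : Fin n, i ≠ j → j ≠ k → i ≠ k →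
      sigmaGen σ k (tauElt σ t μ i j) = tauElt σ t μ i j) :=
  stmt8_general σ t μ hμfix h1 h2
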